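/- arXiv:2402.07343 — 3 statements merged into one kernel-verified Lean document; each statement's English description precedes it below -/
import Mathlib

section
/- Let R be an associative unital (not necessarily commutative) ring and let A, B ∈ R be elements such that 1 − AB and 1 − BA are invertible. Then (1 − A)·(1 − BA)⁻¹·(1 − B) = (1 − B)·(1 − AB)⁻¹·(1 − A). -/
/-- The 6-term identity: for `A B` in an associative unital ring with `1 - A*B`
and `1 - B*A` invertible, the expression `(1-A)(1-BA)⁻¹(1-B)` is symmetric in `A, B`. -/
theorem six_term_identity {R : Type*} [Ring R] (A B : R)
    (hAB : IsUnit (1 - A * B)) (hBA : IsUnit (1 - B * A)) :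
    (1 - A) * Ring.inverse (1 - B * A) * (1 - B) =
      (1 - B) * Ring.inverse (1 - A * B) * (1 - A) := by
  set u := Ring.inverse (1 - A * B) with hu
  set v := Ring.inverse (1 - B * A) with hv
  have hu1 : u * (1 - A * B) = 1 := Ring.inverse_mul_cancel _ hAB
  have hu2 : (1 - A * B) * u = 1 := Ring.mul_inverse_cancel _ hAB
  have hv1 : v * (1 - B * A) = 1 := Ring.inverse_mul_cancel _ hBA
  have hv2 : (1 - B * A) * v = 1 := Ring.mul_inverse_cancel _ hBA
  have key1 : A * v = u * A := by
    have h : (1 - A * B) * A = A * (1 - B * A) := by noncomm_ring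
    calc A * v = u * ((1 - A * B) * A) * v := by rw [← mul_assoc, hu1, one_mul]
    _ = u * (A * (1 - B * A)) * v := by rw [h]
    _ = u * A * ((1 - B * A) * v) := by noncomm_ring
    _ = u * A := by rw [hv2, mul_one]
  have key2 : B * u = v * B := by
    have h : (1 - B * A) * B = B * (1 - A * B) := by noncomm_ring
    calc B * u = v * ((1 - B * A) * B) * u := by rw [← mul_assoc, hv1, one_mul]
    _ = v * (B * (1 - A * B)) * u := by rw [h]
    _ = v * B * ((1 - A * B) * u) := by noncomm_ring
    _ = v * B := by rw [hu2, mul_one]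
  have hvu : v + u * (A * B) = u + v * (B * A) := by
    have h1 : u - u * (A * B) = 1 := by rw [← hu1]; noncomm_ring
    have h2 : v - v * (B * A) = 1 := by rw [← hv1]; noncomm_ring
    have := h1.trans h2.symm
    linear_combination (norm := noncomm_ring) -this
  calc (1 - A) * v * (1 - B)
      = v - v * B - A * v + A * v * B := by noncomm_ring
    _ = v - v * B - u * A + u * A * B := by rw [key1]
    _ = (v + u * (A * B)) - v * B - u * A := by noncomm_ring
    _ = (u + v * (B * A)) - v * B - u * A := by rw [hvu]
    _ = u - u * A - B * u + B * u * A := by rw [key2]; noncomm_ring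
    _ = (1 - B) * u * (1 - A) := by noncomm_ring
end

section
/- Let R be an associative unital ring and A, B ∈ R such that 1 − B, 1 − AB and 1 − BA are invertible. Then (1 − B)⁻¹·(1 − A) = (1 − AB)⁻¹·(1 − A)·(1 − B)⁻¹·(1 − BA). -/
/-- The 5-term identity: `h(B,A) = h(AB,A) · h(B,BA)` for `h(B,A) = (1-B)⁻¹(1-A)`. -/
theorem five_term_identity {R : Type*} [Ring R] (A B : R)
    (hB : IsUnit (1 - B)) (hAB : IsUnit (1 - A * B)) (hBA : IsUnit (1 - B * A)) :
    Ring.inverse (1 - B) * (1 - A) =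
      Ring.inverse (1 - A * B) * (1 - A) * (Ring.inverse (1 - B) * (1 - B * A)) := by
  set u := Ring.inverse (1 - B) with hu
  have h1 : u * (1 - B) = 1 := Ring.inverse_mul_cancel _ hB
  have h2 : (1 - B) * u = 1 := Ring.mul_inverse_cancel _ hB
  have key : u = 1 + B * u := by
    have h2' : u - B * u = 1 := by rw [← h2]; noncomm_ring
    exact eq_add_of_sub_eq h2'
  have comm : u * B = B * u := by
    calc u * B = u * B * ((1 - B) * u) := by rw [h2, mul_one]
      _ = u * (B * (1 - B)) * u := by noncomm_ring
      _ = u * ((1 - B) * B) * u := by noncomm_ring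
      _ = (u * (1 - B)) * (B * u) := by noncomm_ring
      _ = B * u := by rw [h1, one_mul]
  have e1 : u * A = A + B * u * A := by nth_rewrite 1 [key]; noncomm_ring
  have e2 : A * u = A + A * B * u := by nth_rewrite 1 [key]; noncomm_ring
  have hAB1 : Ring.inverse (1 - A * B) * (1 - A * B) = 1 :=
    Ring.inverse_mul_cancel _ hAB
  have main : (1 - A * B) * (u * (1 - A)) = (1 - A) * (u * (1 - B * A)) := by
    linear_combination (norm := noncomm_ring) e2 - e1 + comm * A - A * comm * A
  calc u * (1 - A) = (Ring.inverse (1 - A * B) * (1 - A * B)) * (u * (1 - A)) := by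
        rw [hAB1, one_mul]
    _ = Ring.inverse (1 - A * B) * ((1 - A * B) * (u * (1 - A))) := by rw [mul_assoc]
    _ = Ring.inverse (1 - A * B) * ((1 - A) * (u * (1 - B * A))) := by rw [main]
    _ = Ring.inverse (1 - A * B) * (1 - A) * (u * (1 - B * A)) := by rw [← mul_assoc]
end

section
/- Let V be a finite-dimensional real vector space endowed with alternating bilinear forms ω₁, ω₂ such that c₁ω₁ + c₂ω₂ is nondegenerate for every (c₁,c₂) ∈ ℝ² ∖ {(0,0)}. Then the dimension of V is divisible by 4. -/
/-!
Write `ω₂ x y = ω₁ x (R y)`. Then `R` is `ω₁`-self-adjoint, and it has no real eigenvalue because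
`ω₂ - r ω₁` is nondegenerate. Over `ℂ`, distinct generalized eigenspaces of a self-adjoint map
are orthogonal, so `ω₁` restricts to a nondegenerate alternating form on each of them: every
eigenvalue of `R` has even multiplicity. The eigenvalues are non-real and come in conjugate pairs
of equal multiplicity, so the dimension is twice a sum of even numbers.
-/

open Polynomial ComplexConjugate Matrix

theorem Matrix.det_eq_zero_of_transpose_eq_neg {K n : Type*} [Field K] [NeZero (2 : K)]
    [Fintype n] [DecidableEq n] {A : Matrix n n K} (hA : Aᵀ = -A) (hn : Odd (Fintype.card n)) :
    A.det = 0 := by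
  have h : A.det = -A.det := by
    conv_lhs => rw [← det_transpose, hA, det_neg, hn.neg_one_pow, neg_one_mul]
  have h2 : (2 : K) * A.det = 0 := by linear_combination h
  exact (mul_eq_zero.1 h2).resolve_left two_ne_zero

namespace LinearMap.BilinForm

variable {K V : Type*} [Field K] [AddCommGroup V] [Module K V]

theorem apply_eq_zero_of_mem_maxGenEigenspace {B : LinearMap.BilinForm K V} {T : Module.End K V}
    (hT : B.IsSelfAdjoint T) {μ ν : K} (hμν : μ ≠ ν) {x y : V}
    (hx : x ∈ T.maxGenEigenspace μ) (hy : y ∈ T.maxGenEigenspace ν) : B x y = 0 := by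
  obtain ⟨k, hk⟩ := (T.mem_maxGenEigenspace μ x).1 hx
  obtain ⟨l, hl⟩ := (T.mem_maxGenEigenspace ν y).1 hy
  clear hx hy
  induction k generalizing x l y with
  | zero => simp_all
  | succ k ihk =>
    induction l generalizing y with
    | zero => simp_all
    | succ l ihl =>
      have hshift : (μ - ν) * B x y = B x ((T - ν • 1) y) - B ((T - μ • 1) x) y := by
        simp only [smul_apply, Module.End.one_apply, map_sub, map_smul,
          LinearMap.sub_apply, LinearMap.smul_apply, smul_eq_mul, hT x y]
        ring
      rw [ihl (y := (T - ν • 1) y) (by rwa [← Module.End.mul_apply, ← pow_succ]),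
        ihk (x := (T - μ • 1) x) (by rwa [← Module.End.mul_apply, ← pow_succ]) (l + 1) hl,
        sub_zero] at hshift
      exact (mul_eq_zero.1 hshift).resolve_left (sub_ne_zero.2 hμν)

theorem Nondegenerate.restrict_maxGenEigenspace [IsAlgClosed K] [FiniteDimensional K V]
    {B : LinearMap.BilinForm K V} (hB : B.Nondegenerate) {T : Module.End K V}
    (hT : B.IsSelfAdjoint T) (μ : K) : (B.restrict (T.maxGenEigenspace μ)).Nondegenerate := by
  refine .ofSeparatingLeft fun x hx ↦ Subtype.ext <| hB.1 x fun y ↦ ?_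
  have hker : ⨆ ν, T.maxGenEigenspace ν ≤ LinearMap.ker (B x) := by
    refine iSup_le fun ν z hz ↦ ?_
    obtain rfl | hμν := eq_or_ne ν μ
    · exact hx ⟨z, hz⟩
    · exact apply_eq_zero_of_mem_maxGenEigenspace hT hμν.symm x.2 hz
  rw [T.iSup_maxGenEigenspace_eq_top] at hker
  exact hker Submodule.mem_top

theorem IsAlt.transpose_toMatrix {ι : Type*} [Fintype ι] [DecidableEq ι]
    {B : LinearMap.BilinForm K V} (hB : B.IsAlt) (b : Module.Basis ι K V) :
    (toMatrix b B)ᵀ = -toMatrix b B := by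
  ext i j
  rw [transpose_apply, Matrix.neg_apply, toMatrix_apply, toMatrix_apply]
  exact (LinearMap.IsAlt.neg hB _ _).symm

theorem IsAlt.even_finrank [FiniteDimensional K V] [NeZero (2 : K)]
    {B : LinearMap.BilinForm K V} (hB : B.IsAlt) (hnd : B.Nondegenerate) : Even (Module.finrank K V) := by
  let b := Module.finBasis K V
  refine Nat.not_odd_iff_even.1 fun hodd ↦ (nondegenerate_iff_det_ne_zero b).1 hnd <|
    Matrix.det_eq_zero_of_transpose_eq_neg (hB.transpose_toMatrix b) (by simpa using hodd)

theorem even_rootMultiplicity_charpoly [IsAlgClosed K] [FiniteDimensional K V]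
    [NeZero (2 : K)] {B : LinearMap.BilinForm K V} (hB : B.IsAlt) (hnd : B.Nondegenerate)
    {T : Module.End K V} (hT : B.IsSelfAdjoint T) (μ : K) : Even (T.charpoly.rootMultiplicity μ) := by
  rw [← LinearMap.finrank_maxGenEigenspace_eq]
  exact IsAlt.even_finrank (B := B.restrict _) (fun x ↦ hB x)
    (hnd.restrict_maxGenEigenspace hT μ)

end LinearMap.BilinForm

theorem Matrix.even_rootMultiplicity_charpoly {K n : Type*} [Field K] [IsAlgClosed K]
    [NeZero (2 : K)] [Fintype n] [DecidableEq n] {N P : Matrix n n K} (hN : Nᵀ = -N)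
    (hdet : N.det ≠ 0) (hP : N.IsSelfAdjoint P) (μ : K) :
    Even (P.charpoly.rootMultiplicity μ) := by
  rw [← Matrix.charpoly_toLin']
  refine LinearMap.BilinForm.even_rootMultiplicity_charpoly (B := N.toBilin') ?_
    (LinearMap.BilinForm.nondegenerate_toBilin'_of_det_ne_zero' N hdet) ?_ μ
  · intro x
    have h := dotProduct_transpose_mulVec N x x
    rw [hN, neg_mulVec, dotProduct_neg] at h
    have h2 : (2 : K) * (x ⬝ᵥ N *ᵥ x) = 0 := by linear_combination -h
    rw [toBilin'_apply']
    exact (mul_eq_zero.1 h2).resolve_left two_ne_zero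
  · exact (isAdjointPair_toLinearMap₂' N N P P).2 hP

theorem Polynomial.four_dvd_natDegree_of_even_rootMultiplicity {p : ℝ[X]}
    (hp : ∀ r : ℝ, ¬p.IsRoot r)
    (heven : ∀ μ : ℂ, Even ((p.map (algebraMap ℝ ℂ)).rootMultiplicity μ)) :
    4 ∣ p.natDegree := by
  classical
  set q := p.map (algebraMap ℝ ℂ)
  have hq : q ≠ 0 :=
    (Polynomial.map_ne_zero_iff (algebraMap ℝ ℂ).injective).2 fun h ↦ hp 0 (by simp [h])
  have hconj : ∀ μ, q.rootMultiplicity (conj μ) = q.rootMultiplicity μ := by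
    intro μ
    have hq_conj : q.map (starRingEnd ℂ) = q := by
      rw [map_map]
      congr 1
      ext r
      simp
    rw [eq_rootMultiplicity_map (starRingEnd ℂ).injective μ, hq_conj]
  have hmem : ∀ μ, μ ∈ q.roots.toFinset ↔ 0 < q.rootMultiplicity μ := fun μ ↦ by
    rw [Multiset.mem_toFinset, mem_roots hq, rootMultiplicity_pos hq]
  have hdeg : p.natDegree = ∑ μ ∈ q.roots.toFinset, q.rootMultiplicity μ := by
    simp_rw [← count_roots, Multiset.toFinset_sum_count_eq, IsAlgClosed.card_roots_eq_natDegree,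
      q, natDegree_map]
  -- a root and its conjugate contribute `2 * (even number)`, which vanishes in `ZMod 4`
  rw [hdeg, ← ZMod.natCast_eq_zero_iff, Nat.cast_sum]
  refine Finset.sum_involution (fun μ _ ↦ conj μ) (fun μ _ ↦ ?_) (fun μ hμ _ hfix ↦ ?_)
    (fun μ hμ ↦ by rwa [hmem, hconj, ← hmem]) (fun μ _ ↦ Complex.conj_conj μ)
  · obtain ⟨k, hk⟩ := heven μ
    rw [hconj, ← Nat.cast_add, ZMod.natCast_eq_zero_iff, hk]
    omega
  · rw [hmem, rootMultiplicity_pos hq, ← Complex.conj_eq_iff_re.1 hfix] at hμ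
    exact hp _ ((isRoot_map_iff (algebraMap ℝ ℂ).injective).1 hμ)

theorem Matrix.four_dvd_card_of_det_pencil_ne_zero {ι : Type*} [Fintype ι] [DecidableEq ι]
    {M₁ M₂ : Matrix ι ι ℝ} (h₁ : M₁ᵀ = -M₁) (h₂ : M₂ᵀ = -M₂)
    (hdet : ∀ c₁ c₂ : ℝ, (c₁, c₂) ≠ (0, 0) → (c₁ • M₁ + c₂ • M₂).det ≠ 0) :
    4 ∣ Fintype.card ι := by
  have hM₁ : M₁.det ≠ 0 := by simpa using hdet 1 0 (by simp)
  obtain ⟨R, hM₁R⟩ : ∃ R, M₁ * R = M₂ :=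
    ⟨M₁⁻¹ * M₂, mul_nonsing_inv_cancel_left M₁ M₂ (isUnit_iff_ne_zero.2 hM₁)⟩
  have hR : Rᵀ * M₁ = M₁ * R := calc
    Rᵀ * M₁ = -(M₁ * R)ᵀ := by rw [transpose_mul, h₁, Matrix.mul_neg, neg_neg]
    _ = M₁ * R := by rw [hM₁R, h₂, neg_neg]
  have hroots : ∀ r : ℝ, ¬R.charpoly.IsRoot r := by
    intro r hr
    rw [IsRoot, eval_charpoly] at hr
    have hpencil : r • M₁ + (-1 : ℝ) • M₂ = M₁ * (scalar ι r - R) := by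
      rw [Matrix.mul_sub, hM₁R, scalar_apply, ← smul_one_eq_diagonal, Matrix.mul_smul,
        Matrix.mul_one, neg_one_smul, sub_eq_add_neg]
    exact hdet r (-1) (by simp) (by rw [hpencil, det_mul, hr, mul_zero])
  have heven : ∀ μ : ℂ, Even ((R.charpoly.map (algebraMap ℝ ℂ)).rootMultiplicity μ) := by
    intro μ
    rw [← charpoly_map]
    refine even_rootMultiplicity_charpoly (N := M₁.map (algebraMap ℝ ℂ)) ?_ ?_ ?_ μ
    · rw [← transpose_map, h₁, Matrix.map_neg _ (map_neg _)]
    · rw [← RingHom.mapMatrix_apply, ← RingHom.map_det]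
      exact (_root_.map_ne_zero _).2 hM₁
    · show (R.map _)ᵀ * M₁.map _ = M₁.map _ * R.map _
      rw [← transpose_map, ← Matrix.map_mul, ← Matrix.map_mul, hR]
  simpa using Polynomial.four_dvd_natDegree_of_even_rootMultiplicity hroots heven

/-- A finite-dimensional real vector space carrying a pencil of alternating forms that is
nondegenerate at every nonzero parameter has dimension divisible by `4`. -/
theorem allowable_pair_dim_div_four {V : Type*} [AddCommGroup V] [Module ℝ V]
    [FiniteDimensional ℝ V]
    (ω₁ ω₂ : LinearMap.BilinForm ℝ V)
    (h₁ : LinearMap.BilinForm.IsAlt ω₁) (h₂ : LinearMap.BilinForm.IsAlt ω₂)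
    (hnd : ∀ c₁ c₂ : ℝ, (c₁, c₂) ≠ (0, 0) →
      LinearMap.BilinForm.Nondegenerate (c₁ • ω₁ + c₂ • ω₂)) :
    4 ∣ Module.finrank ℝ V := by
  let b := Module.finBasis ℝ V
  have hdet (c₁ c₂ : ℝ) (hc : (c₁, c₂) ≠ (0, 0)) : (c₁ • LinearMap.BilinForm.toMatrix b ω₁ +
      c₂ • LinearMap.BilinForm.toMatrix b ω₂).det ≠ 0 := by
    simpa using (LinearMap.BilinForm.nondegenerate_iff_det_ne_zero b).1 (hnd c₁ c₂ hc)
  simpa using Matrix.four_dvd_card_of_det_pencil_ne_zero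
    (h₁.transpose_toMatrix b) (h₂.transpose_toMatrix b) hdet
end
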